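/- Let d ≥ 3 be an integer, H_1,…,H_d ∈ (0,1), K_1,…,K_d ∈ (0,1] with 2H_jK_j > 1 for each j, θ ∈ ℝ and x ∈ ℝ^d. Then there exists a constant C > 0 (depending only on d, the H_j, K_j and θ) such that for every s > 0 and every z ∈ ℝ^d with z ≠ x, the partial derivative of Ū with respect to the time variable satisfies |∂_s Ū(s,z)| ≤ C s^{−d/2 + θ} |w(s,z)|^{2−d}, where w(s,z) ∈ ℝ^d has components w_j(s,z) = (z_j − x_j) s^{−H_jK_j}. -/

import Mathlib

open scoped Real

/-- Twice the kernel of the `d`-dimensional Newtonian potential (`d ≥ 3`):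
`U(v) = -(Γ(d/2 - 1)/(2π^{d/2})) |v|^{2-d}`. -/
noncomputable def newtonU (d : ℕ) (v : EuclideanSpace ℝ (Fin d)) : ℝ :=
  -(Real.Gamma ((d : ℝ)/2 - 1) / (2 * Real.pi ^ ((d : ℝ)/2))) * ‖v‖ ^ ((2:ℝ) - d)

/-- `Ū(s,z) = (Π_j 2H_jK_j)^{-1/2} s^θ U(v(s,z))` where
`v_j(s,z) = (z_j - x_j) s^{1/2 - H_jK_j} / √(2H_jK_j)`. -/
noncomputable def Ubar (d : ℕ) (H K : Fin d → ℝ) (θ : ℝ) (x : EuclideanSpace ℝ (Fin d))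
    (s : ℝ) (z : EuclideanSpace ℝ (Fin d)) : ℝ :=
  (∏ j, 2 * H j * K j) ^ (-(1:ℝ)/2) * s ^ θ *
    newtonU d ((WithLp.equiv 2 (Fin d → ℝ)).symm
      (fun j => (z j - x j) * s ^ ((1:ℝ)/2 - H j * K j) / Real.sqrt (2 * H j * K j)))

/-!
For `u > 0`, `Ū(u, z) = -c u^θ Q(u)^e` with `e = (2 - d)/2` and
`Q(u) = ∑_j (z_j - x_j)² / (2H_jK_j) · u^{1 - 2H_jK_j}`, a nonnegative combination of powers
of `u`. Hence `|u Q'(u)| ≤ (max_j |1 - 2H_jK_j|) Q(u)`, so `|∂_u (u^θ Q(u)^e)|` is at most a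
constant times `u^{θ-1} Q(u)^e`. Finally `Q(s) ≥ s |w(s, z)|² / ∑_j 2H_jK_j`, and `e < 0` turns
this lower bound on `Q` into the upper bound `Q(s)^e ≤ C s^e |w(s, z)|^{2-d}`.
-/

open Finset Filter Topology

theorem abs_deriv_rpow_mul_rpow_le {Q : ℝ → ℝ} {Q' s θ e P : ℝ} (hs : 0 < s)
    (hQ : HasDerivAt Q Q' s) (hQs : 0 < Q s) (hQ' : |Q'| ≤ P * Q s / s) :
    |deriv (fun u => u ^ θ * Q u ^ e) s| ≤ (|θ| + |e| * P) * (s ^ (θ - 1) * Q s ^ e) := by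
  rw [((Real.hasDerivAt_rpow_const (Or.inl hs.ne')).fun_mul (hQ.rpow_const (Or.inl hQs.ne'))).deriv]
  have hlog : |s * Q' / Q s| ≤ P := by
    rw [abs_div, abs_mul, abs_of_pos hs, abs_of_pos hQs, div_le_iff₀ hQs]
    calc s * |Q'| ≤ s * (P * Q s / s) := by gcongr
      _ = P * Q s := by field_simp
  calc |θ * s ^ (θ - 1) * Q s ^ e + s ^ θ * (Q' * e * Q s ^ (e - 1))|
      = |θ + e * (s * Q' / Q s)| * (s ^ (θ - 1) * Q s ^ e) := by
        rw [← abs_of_pos (by positivity : 0 < s ^ (θ - 1) * Q s ^ e), ← abs_mul,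
          Real.rpow_sub_one hs.ne', Real.rpow_sub_one hQs.ne']
        congr 1
        field_simp
    _ ≤ (|θ| + |e| * P) * (s ^ (θ - 1) * Q s ^ e) := by
        gcongr
        calc |θ + e * (s * Q' / Q s)| ≤ |θ| + |e| * |s * Q' / Q s| := by
              rw [← abs_mul]; exact abs_add_le _ _
          _ ≤ |θ| + |e| * P := by gcongr

section RpowSum

variable {ι : Type*} [Fintype ι]

theorem hasDerivAt_sum_mul_rpow (a p : ι → ℝ) {s : ℝ} (hs : 0 < s) :
    HasDerivAt (fun u => ∑ j, a j * u ^ p j) (∑ j, a j * (p j * s ^ (p j - 1))) s :=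
  HasDerivAt.fun_sum fun j _ => (Real.hasDerivAt_rpow_const (Or.inl hs.ne')).const_mul (a j)

theorem abs_sum_mul_mul_rpow_sub_one_le {a p : ι → ℝ} {P s : ℝ} (ha : ∀ j, 0 ≤ a j)
    (hp : ∀ j, |p j| ≤ P) (hs : 0 < s) :
    |∑ j, a j * (p j * s ^ (p j - 1))| ≤ P * (∑ j, a j * s ^ p j) / s := by
  rw [mul_sum, sum_div]
  refine (abs_sum_le_sum_abs _ _).trans (sum_le_sum fun j _ => ?_)
  rw [abs_mul, abs_mul, abs_of_nonneg (ha j), abs_of_nonneg (Real.rpow_nonneg hs.le _),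
    Real.rpow_sub_one hs.ne']
  calc a j * (|p j| * (s ^ p j / s)) = a j * |p j| * (s ^ p j / s) := by ring
    _ ≤ a j * P * (s ^ p j / s) := by gcongr; exacts [ha j, hp j]
    _ = P * (a j * s ^ p j) / s := by ring

theorem mul_sum_sq_mul_rpow_neg_div_le {c : ι → ℝ} (y : ι → ℝ) (hc : ∀ j, 0 < c j) {s : ℝ}
    (hs : 0 < s) :
    s * (∑ j, y j ^ 2 * s ^ (-c j)) / ∑ j, c j ≤ ∑ j, y j ^ 2 / c j * s ^ (1 - c j) := by
  rw [mul_sum, sum_div]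
  refine sum_le_sum fun j _ => ?_
  rw [sub_eq_add_neg, Real.rpow_add hs, Real.rpow_one]
  calc s * (y j ^ 2 * s ^ (-c j)) / ∑ k, c k ≤ s * (y j ^ 2 * s ^ (-c j)) / c j :=
        div_le_div_of_nonneg_left (by positivity) (hc j)
          (single_le_sum (fun k _ => (hc k).le) (mem_univ j))
    _ = y j ^ 2 / c j * (s * s ^ (-c j)) := by ring


theorem abs_deriv_rpow_mul_sum_rpow_le {c y : ι → ℝ}
    (hc : ∀ j, 0 < c j) (hy : ∃ j, y j ≠ 0) {θ e s : ℝ} (he : e ≤ 0) (hs : 0 < s) :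
    |deriv (fun u => u ^ θ * (∑ j, y j ^ 2 / c j * u ^ (1 - c j)) ^ e) s| ≤
      (|θ| + |e| * (1 + ∑ j, c j)) * (∑ j, c j) ^ (-e) * s ^ (θ - 1 + e) *
        (∑ j, y j ^ 2 * s ^ (-c j)) ^ e := by
  set S := ∑ j, c j
  set W := ∑ j, y j ^ 2 * s ^ (-c j)
  obtain ⟨j₀, hj₀⟩ := hy
  have hS : 0 < S := sum_pos (fun j _ => hc j) ⟨j₀, mem_univ j₀⟩
  have hW : 0 < W :=
    sum_pos' (fun j _ => by positivity) ⟨j₀, mem_univ j₀, by positivity⟩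
  have hQ := mul_sum_sq_mul_rpow_neg_div_le y hc hs
  have hp (j) : |1 - c j| ≤ 1 + S := by
    have := single_le_sum (fun k _ => (hc k).le) (mem_univ j)
    rw [abs_le]; constructor <;> linarith [hc j]
  have hderiv := abs_deriv_rpow_mul_rpow_le hs (hasDerivAt_sum_mul_rpow _ _ hs)
    ((div_pos (by positivity) hS).trans_le hQ)
    (abs_sum_mul_mul_rpow_sub_one_le (fun j => div_nonneg (sq_nonneg _) (hc j).le) hp hs)
    (θ := θ) (e := e)
  have hpow : (∑ j, y j ^ 2 / c j * s ^ (1 - c j)) ^ e ≤ S ^ (-e) * (s ^ e * W ^ e) := by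
    calc _ ≤ (s * W / S) ^ e := Real.rpow_le_rpow_of_nonpos (by positivity) hQ he
      _ = S ^ (-e) * (s ^ e * W ^ e) := by
        rw [Real.div_rpow (by positivity) hS.le, Real.mul_rpow hs.le hW.le, Real.rpow_neg hS.le]
        ring
  refine hderiv.trans ?_
  rw [Real.rpow_add hs]
  calc (|θ| + |e| * (1 + S)) * (s ^ (θ - 1) * (∑ j, y j ^ 2 / c j * s ^ (1 - c j)) ^ e)
      ≤ (|θ| + |e| * (1 + S)) * (s ^ (θ - 1) * (S ^ (-e) * (s ^ e * W ^ e))) := by gcongr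
    _ = _ := by ring

theorem norm_symm_equiv_rpow (f : ι → ℝ) (r : ℝ) :
    ‖(WithLp.equiv 2 (ι → ℝ)).symm f‖ ^ r = (∑ j, f j ^ 2) ^ (r / 2) := by
  rw [EuclideanSpace.norm_eq, Real.sqrt_eq_rpow, ← Real.rpow_mul (sum_nonneg fun j _ => by positivity)]
  simp [div_eq_inv_mul]

end RpowSum

theorem Ubar_eq {d : ℕ} {H K : Fin d → ℝ} (hc : ∀ j, 0 ≤ 2 * H j * K j) (θ : ℝ)
    (x z : EuclideanSpace ℝ (Fin d)) {u : ℝ} (hu : 0 < u) :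
    Ubar d H K θ x u z =
      -((∏ j, 2 * H j * K j) ^ (-(1:ℝ)/2) *
          (Real.Gamma ((d : ℝ)/2 - 1) / (2 * Real.pi ^ ((d : ℝ)/2)))) *
        (u ^ θ * (∑ j, (z j - x j) ^ 2 / (2 * H j * K j) * u ^ (1 - 2 * H j * K j)) ^
          (((2:ℝ) - d) / 2)) := by
  have hv (j) : ((z j - x j) * u ^ ((1:ℝ)/2 - H j * K j) / √(2 * H j * K j)) ^ 2 =
      (z j - x j) ^ 2 / (2 * H j * K j) * u ^ (1 - 2 * H j * K j) := by
    rw [div_pow, mul_pow, Real.sq_sqrt (hc j), ← Real.rpow_mul_natCast hu.le]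
    ring_nf
  rw [Ubar, newtonU, norm_symm_equiv_rpow]
  simp only [hv]
  ring

theorem Ubar_time_deriv_bound_general (d : ℕ) (hd : 3 ≤ d) (H K : Fin d → ℝ)
    (hHK : ∀ j, 1 < 2 * H j * K j) (θ : ℝ) (x : EuclideanSpace ℝ (Fin d)) :
    ∃ C : ℝ, 0 < C ∧ ∀ s : ℝ, 0 < s → ∀ z : EuclideanSpace ℝ (Fin d), z ≠ x →
      |deriv (fun u : ℝ => Ubar d H K θ x u z) s| ≤
        C * s ^ (-(d : ℝ)/2 + θ) *
          ‖(WithLp.equiv 2 (Fin d → ℝ)).symm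
              (fun j => (z j - x j) * s ^ (-(H j * K j)))‖ ^ ((2:ℝ) - d) := by
  have hc (j) : 0 < 2 * H j * K j := one_pos.trans (hHK j)
  have hd' : (3:ℝ) ≤ d := by exact_mod_cast hd
  set S := ∑ j, 2 * H j * K j
  set e : ℝ := ((2:ℝ) - d) / 2
  set c₀ := (∏ j, 2 * H j * K j) ^ (-(1:ℝ)/2)
  set c₁ := Real.Gamma ((d : ℝ)/2 - 1) / (2 * π ^ ((d : ℝ)/2))
  have hc₀ : 0 < c₀ := Real.rpow_pos_of_pos (prod_pos fun j _ => hc j) _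
  have hc₁ : 0 < c₁ := div_pos (Real.Gamma_pos_of_pos (by linarith)) (by positivity)
  have hS : 0 < S := sum_pos (fun j _ => hc j) ⟨⟨0, by omega⟩, mem_univ _⟩
  have he : e < 0 := div_neg_of_neg_of_pos (by linarith) two_pos
  refine ⟨c₀ * c₁ * ((|θ| + |e| * (1 + S)) * S ^ (-e)),
    by have := abs_pos.mpr he.ne; positivity, fun s hs z hz => ?_⟩
  have hy : ∃ j, z j - x j ≠ 0 := by
    by_contra! h
    exact hz (PiLp.ext fun j => sub_eq_zero.mp (h j))
  have hUbar : (fun u => Ubar d H K θ x u z) =ᶠ[𝓝 s] fun u => -(c₀ * c₁) *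
      (u ^ θ * (∑ j, (z j - x j) ^ 2 / (2 * H j * K j) * u ^ (1 - 2 * H j * K j)) ^ e) :=
    eventually_of_mem (Ioi_mem_nhds hs) fun u hu => Ubar_eq (fun j => (hc j).le) θ x z hu
  have hw : ‖(WithLp.equiv 2 (Fin d → ℝ)).symm (fun j => (z j - x j) * s ^ (-(H j * K j)))‖ ^
      ((2:ℝ) - d) = (∑ j, (z j - x j) ^ 2 * s ^ (-(2 * H j * K j))) ^ e := by
    rw [norm_symm_equiv_rpow]
    congr! 3 with j
    rw [mul_pow, ← Real.rpow_mul_natCast hs.le]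
    ring_nf
  rw [hUbar.deriv_eq, deriv_const_mul_field', abs_mul, abs_neg, abs_of_pos (by positivity), hw]
  calc c₀ * c₁ * |deriv _ s|
      ≤ c₀ * c₁ * ((|θ| + |e| * (1 + S)) * S ^ (-e) * s ^ (θ - 1 + e) *
          (∑ j, (z j - x j) ^ 2 * s ^ (-(2 * H j * K j))) ^ e) := by
        gcongr
        exact abs_deriv_rpow_mul_sum_rpow_le hc hy he.le hs
    _ = _ := by rw [show θ - 1 + e = -(d : ℝ)/2 + θ by ring]; ring

/-- For `d ≥ 3`, `H_j ∈ (0,1)`, `K_j ∈ (0,1]` with `2H_jK_j > 1`, `θ ∈ ℝ`, `x ∈ ℝ^d`,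
there is `C > 0` such that for all `s > 0` and `z ≠ x`,
`|∂_s Ū(s,z)| ≤ C s^{-d/2 + θ} |w(s,z)|^{2-d}` where `w_j(s,z) = (z_j - x_j) s^{-H_jK_j}`. -/
theorem Ubar_time_deriv_bound (d : ℕ) (hd : 3 ≤ d) (H K : Fin d → ℝ)
    (hH : ∀ j, H j ∈ Set.Ioo (0:ℝ) 1) (hK : ∀ j, K j ∈ Set.Ioc (0:ℝ) 1)
    (hHK : ∀ j, 1 < 2 * H j * K j) (θ : ℝ) (x : EuclideanSpace ℝ (Fin d)) :
    ∃ C : ℝ, 0 < C ∧ ∀ s : ℝ, 0 < s → ∀ z : EuclideanSpace ℝ (Fin d), z ≠ x →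
      |deriv (fun u : ℝ => Ubar d H K θ x u z) s| ≤
        C * s ^ (-(d : ℝ)/2 + θ) *
          ‖(WithLp.equiv 2 (Fin d → ℝ)).symm
              (fun j => (z j - x j) * s ^ (-(H j * K j)))‖ ^ ((2:ℝ) - d) :=
  Ubar_time_deriv_bound_general d hd H K hHK θ x
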